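/- Define ℰ_v(n,k) := Σ_{r+s=v, r,s≥0} ((-1)^r / 8^v) · (Γ(v - 3/2) Γ(v + 3/2)) / (s! r! Γ(r - 3/2) Γ(s + 3/2)) · (2k+1)^{2s+1} (8n - (2k+1)²)^r. Then for every v ≥ 0 and every positive integer n, ℰ_v(n,0) ≠ 0. -/

import Mathlib

/-- The quantity `ℰ_v(n,k)` from the paper:
`Σ_{r+s=v} ((-1)^r/8^v) Γ(v-3/2)Γ(v+3/2)/(s! r! Γ(r-3/2) Γ(s+3/2))
   (2k+1)^{2s+1} (8n-(2k+1)²)^r`. -/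
noncomputable def Ecal (v n k : ℕ) : ℝ :=
  ∑ r ∈ Finset.range (v + 1),
    ((-1 : ℝ) ^ r / 8 ^ v) *
      (Real.Gamma ((v : ℝ) - 3 / 2) * Real.Gamma ((v : ℝ) + 3 / 2)) /
      ((Nat.factorial (v - r) : ℝ) * (Nat.factorial r : ℝ) *
        Real.Gamma ((r : ℝ) - 3 / 2) * Real.Gamma (((v - r : ℕ) : ℝ) + 3 / 2)) *
      (2 * (k : ℝ) + 1) ^ (2 * (v - r) + 1) *
      (8 * (n : ℝ) - (2 * (k : ℝ) + 1) ^ 2) ^ r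

/-! The Gamma values in `ℰ_v(n,0)` are all at half-integers, hence rational multiples of `√π`.
Evaluating them turns the `r`-th summand into `(-1)^r C(2v+1,2r) (2r-3)(2r-1) (8n-1)^r` times a
factor depending only on `v`, which is nonzero because `v - 3/2` is not a pole of `Γ`. So
`ℰ_v(n,0)` is a nonzero multiple of `𝒫_v(8n-1) = Pcal v (8n-1)`, and since
`𝒫_v(x) ≡ 𝒫_v(0) = 3 (mod x)`, this cannot vanish for `x = 8n-1 ≥ 7`. -/

open Finset Nat

namespace Real

theorem Gamma_nat_add_half_eq_factorial (n : ℕ) :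
    Gamma (n + 1 / 2) = (2 * n)! * √π / (4 ^ n * n !) := by
  rw [Gamma_nat_add_half]
  cases n with
  | zero => simp
  | succ n =>
    rw [show 2 * (n + 1) = 2 * n + 1 + 1 by ring, factorial_eq_mul_doubleFactorial,
      show 2 * n + 1 + 1 = 2 * (n + 1) by ring, doubleFactorial_two_mul,
      show 2 * (n + 1) - 1 = 2 * n + 1 by omega, show (4 : ℝ) = 2 ^ 2 by norm_num, ← pow_mul]
    push_cast [pow_succ]
    field_simp
    ring

theorem Gamma_nat_add_three_halves_eq_factorial (n : ℕ) :
    Gamma (n + 3 / 2) = (2 * n + 1)! * √π / (2 * 4 ^ n * n !) := by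
  rw [show (n : ℝ) + 3 / 2 = n + 1 + 1 / 2 by ring, Gamma_nat_add_one_add_half,
    factorial_eq_mul_doubleFactorial, doubleFactorial_two_mul,
    show (4 : ℝ) = 2 ^ 2 by norm_num, ← pow_mul]
  push_cast [pow_succ]
  field_simp
  ring

theorem Gamma_nat_sub_three_halves_eq_factorial (n : ℕ) :
    Gamma (n - 3 / 2) = 4 * (2 * n)! * √π / ((2 * n - 3) * (2 * n - 1) * 4 ^ n * n !) := by
  have h₁ : (2 * n - 3 : ℝ) ≠ 0 := by rw [sub_ne_zero]; exact_mod_cast (by omega : 2 * n ≠ 3)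
  have h₂ : (2 * n - 1 : ℝ) ≠ 0 := by rw [sub_ne_zero]; exact_mod_cast (by omega : 2 * n ≠ 1)
  have h := Gamma_nat_add_half_eq_factorial n
  rw [show (n : ℝ) + 1 / 2 = (n - 3 / 2 + 1) + 1 by ring,
    Gamma_add_one (by contrapose! h₂; linarith), Gamma_add_one (by contrapose! h₁; linarith)] at h
  rw [eq_div_iff (by positivity)] at h
  rw [eq_div_iff (by simp [h₁, h₂, factorial_ne_zero])]
  linear_combination 4 * h

theorem Gamma_nat_sub_three_halves_ne_zero (n : ℕ) : Gamma (n - 3 / 2) ≠ 0 :=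
  Gamma_ne_zero fun m h => by
    have : ((2 * (n + m) : ℕ) : ℝ) = 3 := by push_cast; linarith
    norm_cast at this; omega

end Real

open Real in
theorem inv_factorial_mul_Gamma_mul_Gamma (r s : ℕ) :
    ((s ! : ℝ) * r ! * Gamma (r - 3 / 2) * Gamma (s + 3 / 2))⁻¹ =
      4 ^ (r + s) * (2 * r - 3) * (2 * r - 1) * (2 * (r + s) + 1).choose (2 * r) /
        (2 * π * (2 * (r + s) + 1)!) := by
  rw [Gamma_nat_sub_three_halves_eq_factorial, Gamma_nat_add_three_halves_eq_factorial,
    Nat.cast_choose ℝ (by omega), show 2 * (r + s) + 1 - 2 * r = 2 * s + 1 by omega]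
  field_simp
  rw [sq_sqrt pi_pos.le]
  ring

def Pcal (v : ℕ) (x : ℤ) : ℤ :=
  ∑ r ∈ range (v + 1), (-1) ^ r * (2 * v + 1).choose (2 * r) * (2 * r - 3) * (2 * r - 1) * x ^ r

theorem dvd_Pcal_sub_three (v : ℕ) (x : ℤ) : x ∣ Pcal v x - 3 := by
  rw [Pcal, sum_range_succ']
  simp only [pow_zero, mul_zero, choose_zero_right, CharP.cast_eq_zero, zero_sub, mul_one,
    Int.reduceNeg, mul_neg, one_mul, neg_neg, add_sub_cancel_right, cast_add, cast_one]
  exact dvd_sum fun r _ => (dvd_pow_self x r.succ_ne_zero).mul_left _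

theorem Pcal_ne_zero (v : ℕ) {x : ℤ} (hx : 3 < x) : Pcal v x ≠ 0 := by
  intro h
  have h3 : x ∣ 3 := by simpa [h] using dvd_Pcal_sub_three v x
  linarith [Int.le_of_dvd three_pos h3]

open Real in
theorem Ecal_zero_eq (v n : ℕ) :
    Ecal v n 0 = Gamma (v - 3 / 2) * Gamma (v + 3 / 2) / (2 ^ (v + 1) * π * (2 * v + 1)!) *
      (Pcal v (8 * n - 1) : ℝ) := by
  rw [Ecal, Pcal, Int.cast_sum, mul_sum]
  refine sum_congr rfl fun r hr => ?_
  obtain ⟨s, rfl⟩ := Nat.exists_eq_add_of_le (Nat.lt_succ_iff.1 (mem_range.1 hr))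
  rw [Nat.add_sub_cancel_left, mul_div_assoc _ _ (_ * _), div_eq_mul_inv _ (_ * _),
    inv_factorial_mul_Gamma_mul_Gamma, show (8 : ℝ) ^ (r + s) = 2 ^ (r + s) * 4 ^ (r + s) by rw [← mul_pow]; norm_num]
  push_cast
  field_simp
  ring

theorem Ecal_n_zero_ne_zero (v : ℕ) (n : ℕ) (hn : 1 ≤ n) : Ecal v n 0 ≠ 0 := by
  rw [Ecal_zero_eq]
  refine mul_ne_zero (div_ne_zero ?_ (by positivity)) (Int.cast_ne_zero.2 (Pcal_ne_zero v ?_))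
  · exact mul_ne_zero (Real.Gamma_nat_sub_three_halves_ne_zero v)
      (Real.Gamma_pos_of_pos (by positivity)).ne'
  · omega
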